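/- Let V ∈ ℂ^{n×n} be invertible, let D ∈ ℂ^{n×n} be a diagonal matrix, and let x ∈ ℂⁿ be nonzero. Then | x*V*VDx / (x*V*Vx) | ≤ ‖V⁻¹‖₂² · | x*Dx / (x*x) | + ‖D‖₂ · ‖V⁻¹‖₂ · ‖V − (V⁻¹)*‖₂. -/

import Mathlib

/-!
With `v = V x` the numerator is `⟪v, V D x⟫` and the denominator is `‖v‖²`. Writing
`V = (V⁻¹)ᴴ + (V - (V⁻¹)ᴴ)`, the first part contributes `⟪v, (V⁻¹)ᴴ D x⟫ = ⟪V⁻¹ v, D x⟫ = ⟪x, D x⟫`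
and the second at most `‖v‖ ‖V - (V⁻¹)ᴴ‖ ‖D‖ ‖x‖ ≤ ‖D‖ ‖V⁻¹‖ ‖V - (V⁻¹)ᴴ‖ ‖v‖²`, because
`‖x‖ ≤ ‖V⁻¹‖ ‖v‖`. Dividing by `‖v‖² ≥ ‖x‖² / ‖V⁻¹‖²` gives the bound. In the operator form
below, `A`, `B`, `T` play the roles of `V`, `V⁻¹`, `D`.
-/

open Matrix

/-- The linear action of a matrix on Euclidean space. -/
noncomputable def mvE {m n : ℕ} (M : Matrix (Fin m) (Fin n) ℂ)
    (x : EuclideanSpace ℂ (Fin n)) : EuclideanSpace ℂ (Fin m) :=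
  Matrix.toEuclideanLin M x

/-- The spectral (ℓ² operator) norm of a complex matrix. -/
noncomputable def specNorm {m n : ℕ} (M : Matrix (Fin m) (Fin n) ℂ) : ℝ :=
  ‖LinearMap.toContinuousLinearMap (Matrix.toEuclideanLin M)‖

open ContinuousLinearMap

theorem norm_le_opNorm_mul_norm_of_leftInverse {𝕜 E F : Type*} [NontriviallyNormedField 𝕜]
    [SeminormedAddCommGroup E] [NormedSpace 𝕜 E] [SeminormedAddCommGroup F] [NormedSpace 𝕜 F]
    {A : E →L[𝕜] F} {B : F →L[𝕜] E} (hBA : Function.LeftInverse B A) (x : E) :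
    ‖x‖ ≤ ‖B‖ * ‖A x‖ := by
  simpa only [hBA x] using B.le_opNorm (A x)

section
variable {𝕜 E F : Type*} [RCLike 𝕜] [NormedAddCommGroup E] [InnerProductSpace 𝕜 E]
  [CompleteSpace E] [NormedAddCommGroup F] [InnerProductSpace 𝕜 F] [CompleteSpace F]
  {A : E →L[𝕜] F} {B : F →L[𝕜] E}

local notation "⟪" x ", " y "⟫" => inner 𝕜 x y

theorem inner_map_map_sub_inner_eq (hBA : Function.LeftInverse B A) (x y : E) :
    ⟪A x, A y⟫ - ⟪x, y⟫ = ⟪A x, (A - adjoint B) y⟫ := by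
  rw [_root_.sub_apply, inner_sub_right, adjoint_inner_right, hBA x]

theorem norm_inner_map_map_sub_inner_le (hBA : Function.LeftInverse B A) (T : E →L[𝕜] E)
    (x : E) : ‖⟪A x, A (T x)⟫ - ⟪x, T x⟫‖ ≤ ‖T‖ * ‖B‖ * ‖A - adjoint B‖ * ‖A x‖ ^ 2 := by
  rw [inner_map_map_sub_inner_eq hBA]
  calc ‖⟪A x, (A - adjoint B) (T x)⟫‖ ≤ ‖A x‖ * (‖A - adjoint B‖ * (‖T‖ * ‖x‖)) := by
        grw [norm_inner_le_norm, le_opNorm (A - adjoint B), le_opNorm T]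
    _ ≤ ‖A x‖ * (‖A - adjoint B‖ * (‖T‖ * (‖B‖ * ‖A x‖))) := by
        grw [norm_le_opNorm_mul_norm_of_leftInverse hBA x]
    _ = ‖T‖ * ‖B‖ * ‖A - adjoint B‖ * ‖A x‖ ^ 2 := by ring

theorem norm_rayleigh_quotient_conj_le (hBA : Function.LeftInverse B A) (T : E →L[𝕜] E)
    {x : E} (hx : x ≠ 0) :
    ‖⟪A x, A (T x)⟫ / ⟪A x, A x⟫‖ ≤
      ‖B‖ ^ 2 * ‖⟪x, T x⟫ / ⟪x, x⟫‖ + ‖T‖ * ‖B‖ * ‖A - adjoint B‖ := by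
  have hAx : A x ≠ 0 := fun h => hx (by rw [← hBA x, h, map_zero])
  have hr : 0 < ‖A x‖ ^ 2 := by positivity
  have hxB : ‖x‖ ^ 2 ≤ ‖B‖ ^ 2 * ‖A x‖ ^ 2 := by
    rw [← mul_pow]; gcongr; exact norm_le_opNorm_mul_norm_of_leftInverse hBA x
  have hnum := norm_inner_map_map_sub_inner_le hBA T x
  rw [norm_div, norm_div, inner_self_eq_norm_sq_to_K, inner_self_eq_norm_sq_to_K]
  simp only [norm_pow, RCLike.norm_ofReal, abs_norm]
  set q := ⟪x, T x⟫
  set C := ‖T‖ * ‖B‖ * ‖A - adjoint B‖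
  have hq : ‖q‖ / ‖A x‖ ^ 2 ≤ ‖B‖ ^ 2 * (‖q‖ / ‖x‖ ^ 2) := by
    rw [div_le_iff₀ hr]
    calc ‖q‖ = ‖q‖ / ‖x‖ ^ 2 * ‖x‖ ^ 2 := by field_simp
      _ ≤ ‖q‖ / ‖x‖ ^ 2 * (‖B‖ ^ 2 * ‖A x‖ ^ 2) := by gcongr
      _ = _ := by ring
  calc ‖⟪A x, A (T x)⟫‖ / ‖A x‖ ^ 2 ≤ (‖q‖ + C * ‖A x‖ ^ 2) / ‖A x‖ ^ 2 := by
        gcongr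
        exact (norm_le_insert' _ q).trans (add_le_add_right hnum _)
    _ = ‖q‖ / ‖A x‖ ^ 2 + C := by field_simp
    _ ≤ ‖B‖ ^ 2 * (‖q‖ / ‖x‖ ^ 2) + C := by gcongr
end

theorem mvE_mul {l m n : ℕ} (M : Matrix (Fin l) (Fin m) ℂ) (N : Matrix (Fin m) (Fin n) ℂ)
    (x : EuclideanSpace ℂ (Fin n)) : mvE (M * N) x = mvE M (mvE N x) := by
  simp only [mvE, toLpLin_mul_same, LinearMap.coe_comp, Function.comp_apply]

theorem inner_mvE_conjTranspose_mul {l m n : ℕ} (M : Matrix (Fin l) (Fin m) ℂ)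
    (N : Matrix (Fin l) (Fin n) ℂ) (x : EuclideanSpace ℂ (Fin m)) (y : EuclideanSpace ℂ (Fin n)) :
    inner ℂ x (mvE (Mᴴ * N) y) = inner ℂ (mvE M x) (mvE N y) := by
  rw [mvE_mul, mvE, toEuclideanLin_conjTranspose_eq_adjoint, LinearMap.adjoint_inner_right]
  rfl

theorem nonnormal_rayleigh_bound_general (n : ℕ) (V : Matrix (Fin n) (Fin n) ℂ) (hV : IsUnit V.det)
    (D : Matrix (Fin n) (Fin n) ℂ)
    (x : EuclideanSpace ℂ (Fin n)) (hx : x ≠ 0) :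
    ‖(inner ℂ x (mvE (Vᴴ * V * D) x) : ℂ) / (inner ℂ x (mvE (Vᴴ * V) x) : ℂ)‖ ≤
      specNorm V⁻¹ ^ 2 * ‖(inner ℂ x (mvE D x) : ℂ) / (inner ℂ x x : ℂ)‖ +
        specNorm D * specNorm V⁻¹ * specNorm (V - (V⁻¹)ᴴ) := by
  let L := toEuclideanCLM (n := Fin n) (𝕜 := ℂ)
  have hinv : Function.LeftInverse (L V⁻¹) (L V) := fun y => by
    change (L V⁻¹ * L V) y = y
    rw [← map_mul, nonsing_inv_mul V hV, map_one, one_apply_eq_self]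
  have hadj : L V - adjoint (L V⁻¹) = L (V - (V⁻¹)ᴴ) := by
    rw [← star_eq_adjoint, ← map_star, star_eq_conjTranspose, map_sub]
  rw [mul_assoc, inner_mvE_conjTranspose_mul, inner_mvE_conjTranspose_mul, mvE_mul]
  have := norm_rayleigh_quotient_conj_le hinv (L D) hx
  rwa [hadj] at this

/-- For `V` invertible, `D` diagonal and `x ≠ 0`,
`|x*V*VDx/(x*V*Vx)| ≤ ‖V⁻¹‖₂²·|x*Dx/(x*x)| + ‖D‖₂·‖V⁻¹‖₂·‖V − (V⁻¹)*‖₂`. -/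
theorem nonnormal_rayleigh_bound (n : ℕ) (V : Matrix (Fin n) (Fin n) ℂ) (hV : IsUnit V.det)
    (D : Matrix (Fin n) (Fin n) ℂ) (hD : D.IsDiag)
    (x : EuclideanSpace ℂ (Fin n)) (hx : x ≠ 0) :
    ‖(inner ℂ x (mvE (Vᴴ * V * D) x) : ℂ) / (inner ℂ x (mvE (Vᴴ * V) x) : ℂ)‖ ≤
      specNorm V⁻¹ ^ 2 * ‖(inner ℂ x (mvE D x) : ℂ) / (inner ℂ x x : ℂ)‖ +
        specNorm D * specNorm V⁻¹ * specNorm (V - (V⁻¹)ᴴ) :=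
  nonnormal_rayleigh_bound_general n V hV D x hx
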